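/- Let G=(V,E) be a graph, and in the reduced graph G'=(V',E') with V' = {u_i : i ∈ [n]} ∪ {h_e : e ∈ E} ∪ {g} and E' = {{u_i, h_e} : e incident on v_i} ∪ {{u_i, g} : i ∈ [n]}, let U ⊆ V' be any set inducing a connected subgraph and containing at most k vertices from {u_1,...,u_n}. Then the set ({u_i : u_i ∈ U}) ∪ {g} is a vertex cover of G'[U] of size at most k+1. -/
import Mathlib


open SimpleGraph

/-- Vertices of the reduced graph: `u_i`'s, `h_e`'s, and a single global vertex `g`. -/
abbrev PvcV (n : ℕ) (G : SimpleGraph (Fin n)) : Type := Fin n ⊕ G.edgeSet ⊕ Unit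

/-- The reduced graph: edges `{u_i, h_e}` for `e` incident on `v_i`, and `{u_i, g}`. -/
def PvcG (n : ℕ) (G : SimpleGraph (Fin n)) : SimpleGraph (PvcV n G) :=
  SimpleGraph.fromRel (fun x y =>
    match x, y with
    | .inl i, .inr (.inl e) => i ∈ (e : Sym2 (Fin n))
    | .inl _, .inr (.inr _) => True
    | _, _ => False)

/-- If `U` induces a connected subgraph of the reduced graph and contains at most `k`
of the vertices `u_1, ..., u_n`, then `{u_i : u_i ∈ U} ∪ {g}` is a vertex cover of
`G'[U]` of size at most `k + 1`. -/
theorem stmt10 (n : ℕ) (G : SimpleGraph (Fin n)) [DecidableRel G.Adj]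
    (k : ℕ) (U : Finset (PvcV n G))
    (hconn : ((PvcG n G).induce (↑U : Set (PvcV n G))).Connected)
    (hk : (U.filter (fun x => ∃ i : Fin n, x = Sum.inl i)).card ≤ k) :
    ∃ C : Finset (PvcV n G),
      C = U.filter (fun x => ∃ i : Fin n, x = Sum.inl i) ∪ {Sum.inr (Sum.inr ())} ∧
      (∀ a b : PvcV n G, a ∈ U → b ∈ U → (PvcG n G).Adj a b → a ∈ C ∨ b ∈ C) ∧
      C.card ≤ k + 1 := by
  refine ⟨_, rfl, ?_, ?_⟩
  · intro a b ha hb hab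
    rcases hab with ⟨hne, h | h⟩
    · left
      match a, h with
      | .inl i, _ =>
        exact Finset.mem_union_left _ (Finset.mem_filter.2 ⟨ha, i, rfl⟩)
    · right
      match b, h with
      | .inl i, _ =>
        exact Finset.mem_union_left _ (Finset.mem_filter.2 ⟨hb, i, rfl⟩)
  · calc _ ≤ _ := Finset.card_union_le _ _
      _ ≤ k + 1 := by simpa using hk
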